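/- arXiv:2508.11804 — 4 statements merged into one kernel-verified Lean document; each statement's English description precedes it below -/
import Mathlib

section
/- Among 2×2 real symmetric positive semidefinite matrices E = [[ε₁, ε₃],[ε₃, ε₂]] satisfying (n₁+ε₁)(n₂+ε₂) - ε₃² = ω² with n₁, n₂ > 0 and ω² > n₁n₂, the determinant ε₁ε₂ - ε₃² is maximized at ε₃ = 0, ε₁ = √(n₁/n₂)(|ω| - √(n₁n₂)), ε₂ = √(n₂/n₁)(|ω| - √(n₁n₂)), with maximal value (|ω| - √(n₁n₂))². -/
/-!
With `N = diag(n₁, n₂)` the constraint reads `det (N + E) = ω²`, so Minkowski's determinant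
inequality gives `√(n₁ n₂) + √(det E) ≤ |ω|`. Equality needs `E` diagonal with
`n₂ ε₁ = n₁ ε₂`, which pins down the maximiser.
-/

open Matrix

theorem Matrix.PosSemidef.fin_two_of {a b c : ℝ}
    (h : (!![a, c; c, b] : Matrix (Fin 2) (Fin 2) ℝ).PosSemidef) :
    0 ≤ a ∧ 0 ≤ b ∧ c ^ 2 ≤ a * b := by
  have hdet := h.det_nonneg
  rw [det_fin_two_of] at hdet
  exact ⟨by simpa using h.diag_nonneg (i := 0), by simpa using h.diag_nonneg (i := 1),
    by nlinarith⟩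

/-- Minkowski's determinant inequality `√det N + √det E ≤ √det (N + E)` for `N = diag(p, q)`
and `E = !![x, c; c, y]`; the cross term `q x + p y` is bounded below by AM-GM. -/
theorem sqrt_mul_add_sqrt_sub_sq_le {p q x y c : ℝ} (hp : 0 ≤ p) (hq : 0 ≤ q)
    (hx : 0 ≤ x) (hy : 0 ≤ y) (hc : c ^ 2 ≤ x * y) :
    √(p * q) + √(x * y - c ^ 2) ≤ √((p + x) * (q + y) - c ^ 2) := by
  set d := x * y - c ^ 2
  have hd : 0 ≤ d := sub_nonneg.2 hc
  have cross : 2 * (√(p * q) * √d) ≤ q * x + p * y :=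
    calc 2 * (√(p * q) * √d) = 2 * √(p * q * d) := by rw [Real.sqrt_mul (mul_nonneg hp hq)]
      _ ≤ 2 * √((q * x) * (p * y)) := by
        gcongr 2 * √?_
        nlinarith [mul_le_mul_of_nonneg_left (sub_le_self (x * y) (sq_nonneg c))
          (mul_nonneg hp hq)]
      _ ≤ q * x + p * y := by
        rw [Real.sqrt_mul (mul_nonneg hq hx)]
        nlinarith [sq_nonneg (√(q * x) - √(p * y)), Real.sq_sqrt (mul_nonneg hq hx),
          Real.sq_sqrt (mul_nonneg hp hy)]
  apply Real.le_sqrt_of_sq_le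
  nlinarith [Real.sq_sqrt (mul_nonneg hp hq), Real.sq_sqrt hd]

theorem mul_sqrt_div_eq_sqrt_mul {p q : ℝ} (hq : 0 < q) : q * √(p / q) = √(p * q) := by
  rw [← Real.sqrt_sq hq.le, ← Real.sqrt_mul (sq_nonneg q), Real.sqrt_sq hq.le]
  congr 1
  field_simp

theorem constrained_noise_det_max
    (n₁ n₂ ω : ℝ) (hn₁ : 0 < n₁) (hn₂ : 0 < n₂) (hω : n₁ * n₂ < ω ^ 2) :
    (∀ ε₁ ε₂ ε₃ : ℝ,
        (!![ε₁, ε₃; ε₃, ε₂] : Matrix (Fin 2) (Fin 2) ℝ).PosSemidef →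
        (n₁ + ε₁) * (n₂ + ε₂) - ε₃ ^ 2 = ω ^ 2 →
        ε₁ * ε₂ - ε₃ ^ 2 ≤ (|ω| - Real.sqrt (n₁ * n₂)) ^ 2) ∧
      ((!![Real.sqrt (n₁ / n₂) * (|ω| - Real.sqrt (n₁ * n₂)), 0;
            0, Real.sqrt (n₂ / n₁) * (|ω| - Real.sqrt (n₁ * n₂))] :
          Matrix (Fin 2) (Fin 2) ℝ).PosSemidef ∧
        (n₁ + Real.sqrt (n₁ / n₂) * (|ω| - Real.sqrt (n₁ * n₂))) *
            (n₂ + Real.sqrt (n₂ / n₁) * (|ω| - Real.sqrt (n₁ * n₂))) - 0 ^ 2 = ω ^ 2 ∧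
        (Real.sqrt (n₁ / n₂) * (|ω| - Real.sqrt (n₁ * n₂))) *
            (Real.sqrt (n₂ / n₁) * (|ω| - Real.sqrt (n₁ * n₂))) - 0 ^ 2 =
          (|ω| - Real.sqrt (n₁ * n₂)) ^ 2) := by
  set s := √(n₁ * n₂)
  set t := |ω| - s with ht_def
  have hs : s ^ 2 = n₁ * n₂ := Real.sq_sqrt (by positivity)
  have ht : 0 ≤ t := by
    rw [sub_nonneg, ← Real.sqrt_sq_eq_abs]
    exact Real.sqrt_le_sqrt hω.le
  have hab : √(n₁ / n₂) * √(n₂ / n₁) = 1 := by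
    rw [← Real.sqrt_mul (div_nonneg hn₁.le hn₂.le), div_mul_div_comm, mul_comm n₁,
      div_self (by positivity), Real.sqrt_one]
  refine ⟨fun ε₁ ε₂ ε₃ hE hdet => ?_, ?_, ?_, ?_⟩
  · obtain ⟨h₁, h₂, h₃⟩ := hE.fin_two_of
    have hmink := sqrt_mul_add_sqrt_sub_sq_le hn₁.le hn₂.le h₁ h₂ h₃
    rw [hdet, Real.sqrt_sq_eq_abs] at hmink
    rw [← Real.sq_sqrt (sub_nonneg.2 h₃)]
    exact pow_le_pow_left₀ (Real.sqrt_nonneg _) (by linarith) 2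
  · rw [← diagonal_vec2, posSemidef_diagonal_iff]
    simp only [Fin.forall_fin_two]
    exact ⟨mul_nonneg (Real.sqrt_nonneg _) ht, mul_nonneg (Real.sqrt_nonneg _) ht⟩
  · have h₁ : n₂ * √(n₁ / n₂) = s := mul_sqrt_div_eq_sqrt_mul hn₂
    have h₂ : n₁ * √(n₂ / n₁) = s := by rw [mul_sqrt_div_eq_sqrt_mul hn₁, mul_comm]
    linear_combination t * h₁ + t * h₂ + t ^ 2 * hab - hs + (s + t + |ω|) * ht_def + sq_abs ω
  · linear_combination t ^ 2 * hab
end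

section
/- For the two-mode squeezed thermal state with parameters v ≥ 1, r ≥ 0, the quantity 1 - det(C)/det(V_A) - √(det N) equals (2cosh²(2r) - v·cosh(2r) - 1)/cosh²(2r), where C = diag(v sinh 2r, -v sinh 2r), V_A = v cosh(2r)·I, and N = (v/cosh(2r))·I. In particular, this quantity is positive if and only if cosh(2r) > (v + √(v²+8))/4. -/
/-!
Since `sinh² = cosh² - 1`, writing `c = cosh 2r` the quantity is `2 - 1/c² - v/c`, i.e.
`(2c² - vc - 1)/c²`. The numerator factors as `2(c - α₊)(c - α₋)` with
`α± = (v ± √(v² + 8))/4`; as `α₋ < 0 < c`, its sign is that of `c - α₊`.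
-/

open Real

lemma two_sq_sub_mul_sub_one_eq_mul (v c : ℝ) :
    2 * c ^ 2 - v * c - 1 =
      2 * (c - (v + √(v ^ 2 + 8)) / 4) * (c - (v - √(v ^ 2 + 8)) / 4) := by
  have hs : √(v ^ 2 + 8) ^ 2 = v ^ 2 + 8 := sq_sqrt (by positivity)
  linear_combination hs / 8

lemma sub_sqrt_sq_add_eight_neg (v : ℝ) : v - √(v ^ 2 + 8) < 0 := by
  have hlt : √(v ^ 2) < √(v ^ 2 + 8) := sqrt_lt_sqrt (sq_nonneg v) (by linarith)
  rw [sqrt_sq_eq_abs] at hlt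
  linarith [le_abs_self v]

lemma two_sq_sub_mul_sub_one_pos_iff {v c : ℝ} (hc : 0 < c) :
    0 < 2 * c ^ 2 - v * c - 1 ↔ (v + √(v ^ 2 + 8)) / 4 < c := by
  have hlow : 0 < c - (v - √(v ^ 2 + 8)) / 4 := by
    linarith [sub_sqrt_sq_add_eight_neg v]
  rw [two_sq_sub_mul_sub_one_eq_mul, mul_pos_iff_of_pos_right hlow,
    mul_pos_iff_of_pos_left two_pos, sub_pos]

lemma sqrt_sq_div_sq {v c : ℝ} (hv : 0 ≤ v) (hc : 0 ≤ c) : √(v ^ 2 / c ^ 2) = v / c := by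
  rw [← div_pow, sqrt_sq (div_nonneg hv hc)]

theorem tmst_atemporality_criterion_general (v r : ℝ) (hv : 1 ≤ v) :
    1 - (-(v ^ 2 * Real.sinh (2 * r) ^ 2)) / (v ^ 2 * Real.cosh (2 * r) ^ 2) -
        Real.sqrt (v ^ 2 / Real.cosh (2 * r) ^ 2) =
      (2 * Real.cosh (2 * r) ^ 2 - v * Real.cosh (2 * r) - 1) / Real.cosh (2 * r) ^ 2 ∧
    (0 < (2 * Real.cosh (2 * r) ^ 2 - v * Real.cosh (2 * r) - 1) / Real.cosh (2 * r) ^ 2 ↔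
      (v + Real.sqrt (v ^ 2 + 8)) / 4 < Real.cosh (2 * r)) := by
  have hc : 0 < cosh (2 * r) := cosh_pos _
  have hv₀ : 0 < v := by linarith
  constructor
  · rw [sqrt_sq_div_sq hv₀.le hc.le, sinh_sq]
    field_simp
    ring
  · rw [div_pos_iff_of_pos_right (by positivity), two_sq_sub_mul_sub_one_pos_iff hc]

theorem tmst_atemporality_criterion (v r : ℝ) (hv : 1 ≤ v) (hr : 0 ≤ r) :
    1 - (-(v ^ 2 * Real.sinh (2 * r) ^ 2)) / (v ^ 2 * Real.cosh (2 * r) ^ 2) -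
        Real.sqrt (v ^ 2 / Real.cosh (2 * r) ^ 2) =
      (2 * Real.cosh (2 * r) ^ 2 - v * Real.cosh (2 * r) - 1) / Real.cosh (2 * r) ^ 2 ∧
    (0 < (2 * Real.cosh (2 * r) ^ 2 - v * Real.cosh (2 * r) - 1) / Real.cosh (2 * r) ^ 2 ↔
      (v + Real.sqrt (v ^ 2 + 8)) / 4 < Real.cosh (2 * r)) :=
  tmst_atemporality_criterion_general v r hv
end

section
/- Define E(v,r) = −ln(v·e^{−2r}) = 2r − ln v for v ≥ 1, r ≥ 0. Subject to the constraint v ≥ cosh(4r)/cosh(2r), one has E(v,r) ≤ 2r − ln(cosh(4r)/cosh(2r)), and the right-hand side, as a function of r ≥ 0, attains a maximum value of approximately 0.1882 (in particular it is bounded above by 0.19). -/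
/-!
With `t = exp (4 r)` one has `exp (2 r) * cosh (2 r) / cosh (4 r) = t (t + 1) / (t ^ 2 + 1)`, and the
maximum of this rational function is `(1 + √2) / 2`, attained at `t = 1 + √2`. Hence the supremum is
`log ((1 + √2) / 2) ≈ 0.1882`. The reduction in `v` is monotonicity of `log`.
-/

open Real

lemma mul_add_one_le_one_add_sqrt_two_div_two_mul (t : ℝ) :
    t * (t + 1) ≤ (1 + √2) / 2 * (t ^ 2 + 1) := by
  have hsq : √2 ^ 2 = 2 := sq_sqrt zero_le_two
  -- the quadratic `(1 + √2) / 2 * (t ^ 2 + 1) - t * (t + 1)` has a double root at `t = 1 + √2`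
  have hident : (1 + √2) / 2 * (t ^ 2 + 1) - t * (t + 1) = (√2 - 1) / 2 * (t - (1 + √2)) ^ 2 := by
    linear_combination (t - 1 / 2 - √2 / 2) * hsq
  have hcoeff : 0 ≤ √2 - 1 := sub_nonneg.2 (one_le_sqrt.2 one_le_two)
  rw [← sub_nonneg, hident]
  exact mul_nonneg (div_nonneg hcoeff zero_le_two) (sq_nonneg _)

lemma exp_mul_cosh_le (x : ℝ) : exp x * cosh x ≤ (1 + √2) / 2 * cosh (2 * x) := by
  rw [cosh_eq, cosh_eq, exp_neg, exp_neg, two_mul, exp_add]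
  set y := exp x
  have hy : 0 < y := exp_pos x
  have hbound := mul_add_one_le_one_add_sqrt_two_div_two_mul (y * y)
  rw [← sub_nonneg] at hbound ⊢
  have hdiff : (1 + √2) / 2 * ((y * y + (y * y)⁻¹) / 2) - y * ((y + y⁻¹) / 2)
      = ((1 + √2) / 2 * ((y * y) ^ 2 + 1) - y * y * (y * y + 1)) / (2 * (y * y)) := by
    field_simp
  rw [hdiff]
  positivity

lemma sub_log_cosh_two_mul_div_cosh_le (x : ℝ) :
    x - log (cosh (2 * x) / cosh x) ≤ log ((1 + √2) / 2) := by
  have hratio : exp x ≤ (1 + √2) / 2 * (cosh (2 * x) / cosh x) := by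
    rw [mul_div_assoc', le_div_iff₀ (cosh_pos x)]
    exact exp_mul_cosh_le x
  have hlog := log_le_log (exp_pos x) hratio
  rw [log_exp, log_mul (by positivity) (div_pos (cosh_pos _) (cosh_pos _)).ne'] at hlog
  linarith

lemma log_one_add_sqrt_two_div_two_lt : log ((1 + √2) / 2) < 0.19 := by
  have hsqrt : √2 < 1.4143 := by
    rw [sqrt_lt' (by norm_num)]
    norm_num
  rw [log_lt_iff_lt_exp (by positivity)]
  calc (1 + √2) / 2 < 1 + 0.19 + 0.19 ^ 2 / 2 := by linarith
    _ ≤ exp 0.19 := quadratic_le_exp_of_nonneg (by norm_num)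

theorem logneg_bound_zero_atemporality_general (v r : ℝ)
    (hconstraint : Real.cosh (4 * r) / Real.cosh (2 * r) ≤ v) :
    2 * r - Real.log v ≤ 2 * r - Real.log (Real.cosh (4 * r) / Real.cosh (2 * r)) ∧
      ∀ s : ℝ, 0 ≤ s →
        2 * s - Real.log (Real.cosh (4 * s) / Real.cosh (2 * s)) < 0.19 := by
  refine ⟨sub_le_sub_left (log_le_log (div_pos (cosh_pos _) (cosh_pos _)) hconstraint) _,
    fun s _ => ?_⟩
  have h := sub_log_cosh_two_mul_div_cosh_le (2 * s)
  rw [← mul_assoc, show (2 : ℝ) * 2 = 4 by norm_num] at h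
  exact h.trans_lt log_one_add_sqrt_two_div_two_lt

theorem logneg_bound_zero_atemporality (v r : ℝ) (hv : 1 ≤ v) (hr : 0 ≤ r)
    (hconstraint : Real.cosh (4 * r) / Real.cosh (2 * r) ≤ v) :
    2 * r - Real.log v ≤ 2 * r - Real.log (Real.cosh (4 * r) / Real.cosh (2 * r)) ∧
      ∀ s : ℝ, 0 ≤ s →
        2 * s - Real.log (Real.cosh (4 * s) / Real.cosh (2 * s)) < 0.19 :=
  logneg_bound_zero_atemporality_general v r hconstraint
end

section
/- For u, v > 0 with uv ≥ 1, the quantity |1 − det C/det V_A| − √(det N) for the balanced beam-splitter state (V_A = V_B = ((u+v)/2)I, C = diag(−(u−v)/2,(u−v)/2), N = (2uv/(u+v))I) equals 2(u²(1−v) + v²(1−u))/(u+v)², and is positive if and only if (1−u)/u² > (v−1)/v². -/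
/-! For the balanced beam-splitter state both determinant terms are explicit rational functions
of `u` and `v`: `1 - det C / det V_A = 2(u² + v²)/(u + v)²` is positive, so the absolute value
drops, and `√(det N) = 2uv/(u + v)`. The sign criterion comes from the factorisation
`u²(1 - v) + v²(1 - u) = u²v² ((1 - u)/u² - (v - 1)/v²)`. -/

namespace BeamSplitter

lemma one_sub_det_ratio_eq {u v : ℝ} (huv : u + v ≠ 0) :
    1 - (-((u - v) ^ 2 / 4)) / ((u + v) ^ 2 / 4) = 2 * (u ^ 2 + v ^ 2) / (u + v) ^ 2 := by
  field_simp
  ring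

lemma sqrt_det_eq {u v : ℝ} (hu : 0 < u) (hv : 0 < v) :
    Real.sqrt (4 * u ^ 2 * v ^ 2 / (u + v) ^ 2) = 2 * u * v / (u + v) := by
  rw [show 4 * u ^ 2 * v ^ 2 / (u + v) ^ 2 = (2 * u * v / (u + v)) ^ 2 by rw [div_pow]; ring,
    Real.sqrt_sq (by positivity)]

lemma numerator_eq_mul_sub {u v : ℝ} (hu : u ≠ 0) (hv : v ≠ 0) :
    u ^ 2 * (1 - v) + v ^ 2 * (1 - u) = u ^ 2 * v ^ 2 * ((1 - u) / u ^ 2 - (v - 1) / v ^ 2) := by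
  field_simp
  ring

end BeamSplitter

open BeamSplitter in
theorem beamsplitter_atemporality_criterion_general (u v : ℝ) (hu : 0 < u) (hv : 0 < v) :
    |1 - (-((u - v) ^ 2 / 4)) / ((u + v) ^ 2 / 4)| -
        Real.sqrt (4 * u ^ 2 * v ^ 2 / (u + v) ^ 2) =
      2 * (u ^ 2 * (1 - v) + v ^ 2 * (1 - u)) / (u + v) ^ 2 ∧
    (0 < 2 * (u ^ 2 * (1 - v) + v ^ 2 * (1 - u)) / (u + v) ^ 2 ↔
      (v - 1) / v ^ 2 < (1 - u) / u ^ 2) := by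
  have hsum : 0 < u + v := add_pos hu hv
  constructor
  · rw [one_sub_det_ratio_eq hsum.ne', abs_of_pos (by positivity), sqrt_det_eq hu hv]
    field_simp
    ring
  · rw [numerator_eq_mul_sub hu.ne' hv.ne', mul_div_assoc, mul_pos_iff_of_pos_left two_pos,
      div_pos_iff_of_pos_right (by positivity), mul_pos_iff_of_pos_left (by positivity), sub_pos]

theorem beamsplitter_atemporality_criterion (u v : ℝ) (hu : 0 < u) (hv : 0 < v)
    (huv : 1 ≤ u * v) :
    |1 - (-((u - v) ^ 2 / 4)) / ((u + v) ^ 2 / 4)| -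
        Real.sqrt (4 * u ^ 2 * v ^ 2 / (u + v) ^ 2) =
      2 * (u ^ 2 * (1 - v) + v ^ 2 * (1 - u)) / (u + v) ^ 2 ∧
    (0 < 2 * (u ^ 2 * (1 - v) + v ^ 2 * (1 - u)) / (u + v) ^ 2 ↔
      (v - 1) / v ^ 2 < (1 - u) / u ^ 2) :=
  beamsplitter_atemporality_criterion_general u v hu hv
end
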